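/- arXiv:2309.00746 — 2 statements merged into one kernel-verified Lean document; each statement's English description precedes it below -/
import Mathlib

section
/- Let X be a nonempty compact Hausdorff topological space. Then C(X) is approximately algebraically closed if and only if for every integer n ≥ 1, every real number K > 0, all a₀, …, a_{n-1} ∈ C(X) with ‖a_j‖ ≤ K for every j < n, and every ε > 0, there exists f ∈ C(X) with ‖f‖ ≤ 2 + K and ‖a₀ + a₁·f + ⋯ + a_{n-1}·f^{n-1} + f^n‖ < ε. -/
/-! Cauchy's root bound: a monic polynomial with coefficients of norm at most `K` has no
approximate roots outside the disc of radius `2 + K`, since there its value has norm at least `1`.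
So in `C(X)` an approximate root `f` of `∑ aⱼ Tʲ + Tⁿ` with error `< 1` satisfies `‖f‖ ≤ 2 + K`
pointwise. The converse direction only needs some bound `K`, e.g. `‖a‖ + 1`. -/

section CauchyBound

variable {𝕜 : Type*} [NormedDivisionRing 𝕜]

lemma norm_sum_mul_pow_le {n : ℕ} {K : ℝ} {b : Fin n → 𝕜} (hb : ∀ j, ‖b j‖ ≤ K) (z : 𝕜) :
    ‖∑ j : Fin n, b j * z ^ (j : ℕ)‖ ≤ K * ∑ j ∈ Finset.range n, ‖z‖ ^ j :=
  calc ‖∑ j : Fin n, b j * z ^ (j : ℕ)‖ ≤ ∑ j : Fin n, ‖b j‖ * ‖z‖ ^ (j : ℕ) := by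
        simpa only [norm_mul, norm_pow] using
          norm_sum_le Finset.univ fun j : Fin n => b j * z ^ (j : ℕ)
    _ ≤ ∑ j : Fin n, K * ‖z‖ ^ (j : ℕ) := by gcongr with j; exact hb j
    _ = K * ∑ j ∈ Finset.range n, ‖z‖ ^ j := by
        rw [← Finset.mul_sum, Fin.sum_univ_eq_sum_range (fun j => ‖z‖ ^ j)]

lemma one_le_norm_sum_mul_pow_add_pow {n : ℕ} {K : ℝ} {b : Fin n → 𝕜} (hb : ∀ j, ‖b j‖ ≤ K)
    {z : 𝕜} (hz : 2 + K ≤ ‖z‖) : 1 ≤ ‖(∑ j : Fin n, b j * z ^ (j : ℕ)) + z ^ n‖ := by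
  set S := ∑ j ∈ Finset.range n, ‖z‖ ^ j
  have hS : 0 ≤ S := by positivity
  -- `(‖z‖ - 1) S = ‖z‖ⁿ - 1` and `K ≤ ‖z‖ - 2`, so `K S ≤ ‖z‖ⁿ - 1 - S`.
  have hgeom : S * (‖z‖ - 1) = ‖z‖ ^ n - 1 := geom_sum_mul ‖z‖ n
  have hlow := norm_sum_mul_pow_le hb z
  have htri := norm_sub_norm_le (z ^ n) (-∑ j : Fin n, b j * z ^ (j : ℕ))
  rw [norm_neg, norm_pow, sub_neg_eq_add, add_comm] at htri
  nlinarith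

end CauchyBound

lemma ContinuousMap.norm_le_of_norm_sum_mul_pow_add_pow_lt_one {X 𝕜 : Type*}
    [TopologicalSpace X] [CompactSpace X] [NormedField 𝕜] {n : ℕ} {K : ℝ} (hK : 0 ≤ K)
    {a : Fin n → C(X, 𝕜)} (ha : ∀ j, ‖a j‖ ≤ K) {f : C(X, 𝕜)}
    (hf : ‖(∑ j : Fin n, a j * f ^ (j : ℕ)) + f ^ n‖ < 1) : ‖f‖ ≤ 2 + K := by
  refine (ContinuousMap.norm_le _ (by linarith)).2 fun x => ?_
  by_contra! hx
  have hbound := one_le_norm_sum_mul_pow_add_pow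
    (fun j => ((a j).norm_coe_le_norm x).trans (ha j)) hx.le
  have heval := ((∑ j : Fin n, a j * f ^ (j : ℕ)) + f ^ n).norm_coe_le_norm x
  simp only [add_apply, coe_sum, Finset.sum_apply, mul_apply, pow_apply] at heval
  linarith

theorem stmt_0_general {X : Type*} [TopologicalSpace X] [CompactSpace X] :
    (∀ n : ℕ, 1 ≤ n → ∀ a : Fin n → C(X, ℂ), ∀ ε : ℝ, 0 < ε →
      ∃ f : C(X, ℂ), ‖(∑ j : Fin n, a j * f ^ (j : ℕ)) + f ^ n‖ < ε) ↔
    (∀ n : ℕ, 1 ≤ n → ∀ K : ℝ, 0 < K → ∀ a : Fin n → C(X, ℂ), (∀ j, ‖a j‖ ≤ K) →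
      ∀ ε : ℝ, 0 < ε →
      ∃ f : C(X, ℂ), ‖f‖ ≤ 2 + K ∧ ‖(∑ j : Fin n, a j * f ^ (j : ℕ)) + f ^ n‖ < ε) := by
  constructor
  · intro h n hn K hK a ha ε hε
    obtain ⟨f, hf⟩ := h n hn a (min ε 1) (by positivity)
    exact ⟨f, ContinuousMap.norm_le_of_norm_sum_mul_pow_add_pow_lt_one hK.le ha
      (hf.trans_le (min_le_right _ _)), hf.trans_le (min_le_left _ _)⟩
  · intro h n hn a ε hε
    obtain ⟨f, -, hf⟩ := h n hn (‖a‖ + 1) (by positivity) a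
      (fun j => (norm_le_pi_norm a j).trans (le_add_of_nonneg_right zero_le_one)) ε hε
    exact ⟨f, hf⟩

/-- For a nonempty compact Hausdorff space `X`, `C(X)` is approximately algebraically
closed iff for every `n ≥ 1`, `K > 0`, coefficients `a j` with `‖a j‖ ≤ K`, and `ε > 0`,
there is `f` with `‖f‖ ≤ 2 + K` and `‖∑ a j * f ^ j + f ^ n‖ < ε`. -/
theorem stmt_0 {X : Type*} [TopologicalSpace X] [CompactSpace X] [T2Space X] [Nonempty X] :
    (∀ n : ℕ, 1 ≤ n → ∀ a : Fin n → C(X, ℂ), ∀ ε : ℝ, 0 < ε →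
      ∃ f : C(X, ℂ), ‖(∑ j : Fin n, a j * f ^ (j : ℕ)) + f ^ n‖ < ε) ↔
    (∀ n : ℕ, 1 ≤ n → ∀ K : ℝ, 0 < K → ∀ a : Fin n → C(X, ℂ), (∀ j, ‖a j‖ ≤ K) →
      ∀ ε : ℝ, 0 < ε →
      ∃ f : C(X, ℂ), ‖f‖ ≤ 2 + K ∧ ‖(∑ j : Fin n, a j * f ^ (j : ℕ)) + f ^ n‖ < ε) :=
  stmt_0_general
end

section
/- Let X be a nondegenerate indecomposable continuum. Then X is not locally connected at any of its points; that is, for every x ∈ X there exists an open set U containing x such that no connected open set V satisfies x ∈ V ⊆ U. -/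
/-!
A proper subcontinuum `K` with nonempty interior gives a decomposition of `X`: if `Kᶜ` is
connected, take `K` and `closure Kᶜ = (interior K)ᶜ`; otherwise split `Kᶜ` by open sets `u`, `v`
and take `K ∪ Kᶜ ∩ u` and `K ∪ Kᶜ ∩ v`. These are connected: in a separation of either one, the
piece missing `K` is also open, hence empty. At a point `x` choose an open `U ∋ x` whose closure
misses some `y ≠ x`; a connected open `V` with `x ∈ V ⊆ U` would make `closure V` such a
subcontinuum.
-/

open Set

theorem compl_union_inter_eq {α : Type*} {K u v : Set α} (hcov : Kᶜ ⊆ u ∪ v)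
    (huv : Kᶜ ∩ (u ∩ v) = ∅) : (K ∪ Kᶜ ∩ u)ᶜ = Kᶜ ∩ v := by
  ext z
  simp only [mem_compl_iff, mem_union, mem_inter_iff, not_or, not_and]
  exact ⟨fun ⟨hzK, hzu⟩ => ⟨hzK, (hcov hzK).resolve_left (hzu hzK)⟩,
    fun ⟨hzK, hzv⟩ => ⟨hzK, fun _ hzu => huv.subset ⟨hzK, hzu, hzv⟩⟩⟩

section

variable {X : Type*} [TopologicalSpace X]

def IsDecomposition (A B : Set X) : Prop :=
  IsClosed A ∧ IsConnected A ∧ A ≠ univ ∧ IsClosed B ∧ IsConnected B ∧ B ≠ univ ∧ A ∪ B = univ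

variable [ConnectedSpace X]

theorem IsPreconnected.union_of_isOpen {K A : Set X} (hK : IsPreconnected K) (hA : IsOpen A)
    (hKA : IsClosed (K ∪ A)) : IsPreconnected (K ∪ A) := by
  rw [isPreconnected_iff_subset_of_fully_disjoint_closed hKA]
  -- If `K ⊆ u`, then the part of `K ∪ A` in `v` equals `A \ u`, so it is clopen.
  have key : ∀ u v : Set X, IsClosed u → IsClosed v → K ∪ A ⊆ u ∪ v → Disjoint u v → K ⊆ u →
      K ∪ A ⊆ u ∨ K ∪ A ⊆ v := by
    intro u v hu hv hcov huv hKu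
    have heq : (K ∪ A) ∩ v = A \ u := by
      ext z
      constructor
      · rintro ⟨hz | hz, hzv⟩
        · exact absurd hzv (huv.notMem_of_mem_left (hKu hz))
        · exact ⟨hz, huv.notMem_of_mem_right hzv⟩
      · rintro ⟨hzA, hzu⟩
        exact ⟨Or.inr hzA, (hcov (Or.inr hzA)).resolve_left hzu⟩
    have hclopen : IsClopen ((K ∪ A) ∩ v) :=
      ⟨hKA.inter hv, heq ▸ hA.sdiff hu⟩
    rcases isClopen_iff.mp hclopen with h | h
    · exact Or.inl fun z hz => (hcov hz).resolve_right fun hzv => h.subset ⟨hz, hzv⟩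
    · exact Or.inr fun z _ => (h.symm.subset (mem_univ z)).2
  intro u v hu hv hcov huv
  have hK' : K ⊆ u ∪ v := subset_union_left.trans hcov
  rcases (isPreconnected_iff_subset_of_disjoint_closed.mp hK) u v hu hv hK'
      (by rw [huv.inter_eq, inter_empty]) with hKu | hKv
  · exact key u v hu hv hcov huv hKu
  · exact (key v u hv hu (union_comm u v ▸ hcov) huv.symm hKv).symm

theorem exists_isDecomposition_of_interior_nonempty {K : Set X} (hKcl : IsClosed K)
    (hK : IsConnected K) (hKne : K ≠ univ) (hint : (interior K).Nonempty) :
    ∃ A B : Set X, IsDecomposition A B := by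
  have hKc : Kᶜ.Nonempty := nonempty_compl.mpr hKne
  by_cases hconn : IsPreconnected Kᶜ
  · refine ⟨K, closure Kᶜ, hKcl, hK, hKne, isClosed_closure, (IsConnected.closure ⟨hKc, hconn⟩),
      ?_, ?_⟩
    · rw [closure_compl]
      exact fun h => (h.symm.subset (mem_univ _) : hint.some ∈ (interior K)ᶜ) hint.some_mem
    · exact eq_univ_of_forall fun z => (em (z ∈ K)).imp id fun hz => subset_closure hz
  · simp only [IsPreconnected, not_forall, not_nonempty_iff_eq_empty] at hconn
    obtain ⟨u, v, hu, hv, hcov, hKu, hKv, huv⟩ := hconn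
    have hcompl_u : (K ∪ Kᶜ ∩ u)ᶜ = Kᶜ ∩ v := compl_union_inter_eq hcov huv
    have hcompl_v : (K ∪ Kᶜ ∩ v)ᶜ = Kᶜ ∩ u :=
      compl_union_inter_eq (union_comm u v ▸ hcov) (inter_comm u v ▸ huv)
    have hclosed_u : IsClosed (K ∪ Kᶜ ∩ u) := by
      rw [← isOpen_compl_iff, hcompl_u]; exact hKcl.isOpen_compl.inter hv
    have hclosed_v : IsClosed (K ∪ Kᶜ ∩ v) := by
      rw [← isOpen_compl_iff, hcompl_v]; exact hKcl.isOpen_compl.inter hu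
    have hne_univ {P Q : Set X} (hP : Pᶜ = Q) (hQ : Q.Nonempty) : P ≠ univ := by
      rintro rfl; simp [← hP] at hQ
    refine ⟨K ∪ Kᶜ ∩ u, K ∪ Kᶜ ∩ v, hclosed_u,
      ⟨hK.1.mono subset_union_left,
        hK.2.union_of_isOpen (hKcl.isOpen_compl.inter hu) hclosed_u⟩,
      hne_univ hcompl_u hKv, hclosed_v,
      ⟨hK.1.mono subset_union_left,
        hK.2.union_of_isOpen (hKcl.isOpen_compl.inter hv) hclosed_v⟩,
      hne_univ hcompl_v hKu, ?_⟩
    rw [← union_union_distrib_left, ← inter_union_distrib_left,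
      inter_eq_left.mpr hcov, union_compl_self]

end

/-- A nondegenerate indecomposable continuum is not locally connected at any point:
for every `x` there is an open neighbourhood `U` of `x` such that no connected open
set `V` satisfies `x ∈ V ⊆ U`. -/
theorem stmt_3 {X : Type*} [TopologicalSpace X] [CompactSpace X] [T2Space X]
    [ConnectedSpace X] [Nontrivial X]
    (hind : ¬∃ A B : Set X,
      IsClosed A ∧ IsConnected A ∧ A ≠ Set.univ ∧
      IsClosed B ∧ IsConnected B ∧ B ≠ Set.univ ∧ A ∪ B = Set.univ) :
    ∀ x : X, ∃ U : Set X, IsOpen U ∧ x ∈ U ∧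
      ¬∃ V : Set X, IsOpen V ∧ IsConnected V ∧ x ∈ V ∧ V ⊆ U := by
  intro x
  obtain ⟨y, hyx⟩ := exists_ne x
  obtain ⟨U, hxU, hU, W, hyW, -, hUW⟩ := exists_open_nhds_disjoint_closure hyx.symm
  refine ⟨U, hU, hxU, ?_⟩
  rintro ⟨V, hV, hVconn, hxV, hVU⟩
  have hy : y ∉ closure V := fun hyV =>
    hUW.notMem_of_mem_right (subset_closure hyW) (closure_mono hVU hyV)
  exact hind <| exists_isDecomposition_of_interior_nonempty isClosed_closure hVconn.closure
    (ne_univ_iff_exists_notMem _ |>.mpr ⟨y, hy⟩)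
    ⟨x, interior_maximal subset_closure hV hxV⟩
end
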